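/- arXiv:2008.00561 — 5 statements merged into one kernel-verified Lean document; each statement's English description precedes it below -/
import Mathlib

section
/- Let G be a triangle-free graph containing an induced 5-cycle C = c_1c_2c_3c_4c_5 (indices mod 5), and suppose G has no induced subgraph isomorphic to S_{1,2,2}. Then every vertex of G not on C that has a neighbour in V(C) has either exactly one neighbour on C, or exactly two neighbours on C which are non-consecutive on the cycle. -/
variable {V : Type*}

/-- `S_{1,2,2}`: the 6-vertex tree obtained from the claw `K_{1,3}` by subdividing two
of its edges once each. Centre `0`, pendant vertex `1`, paths `0-2-3` and `0-4-5`. -/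
def S122 : SimpleGraph (Fin 6) :=
  SimpleGraph.fromEdgeSet {s(0,1), s(0,2), s(2,3), s(0,4), s(4,5)}

/-! The neighbours of `v` on the cycle form an independent set of `C₅`, since two consecutive
ones would close a triangle with `v`; and a nonempty independent set of `C₅` is a single vertex
or a pair of non-consecutive vertices, which a check of all 32 subsets of `ZMod 5` confirms. -/

theorem ZMod.existsUnique_or_nonconsecutive_pair_of_no_consecutive (p : ZMod 5 → Prop)
    (hne : ∃ i, p i) (hp : ∀ i, ¬(p i ∧ p (i + 1))) :
    (∃! i, p i) ∨
      ∃ i j : ZMod 5, i ≠ j ∧ j ≠ i + 1 ∧ i ≠ j + 1 ∧ ∀ k, p k ↔ (k = i ∨ k = j) := by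
  have key : ∀ g : ZMod 5 → Bool, (∃ i, g i) → (∀ i, ¬(g i ∧ g (i + 1))) →
      (∃ i, g i ∧ ∀ j, g j → j = i) ∨
        ∃ i j : ZMod 5, i ≠ j ∧ j ≠ i + 1 ∧ i ≠ j + 1 ∧ ∀ k, g k ↔ (k = i ∨ k = j) := by
    decide
  classical
  have h := key (fun i => decide (p i)) (by simpa using hne) (by simpa using hp)
  simp only [decide_eq_true_eq] at h
  exact h

theorem neighbours_on_C5_general (G : SimpleGraph V) (htri : G.CliqueFree 3)
    (c : ZMod 5 → V)
    (hC : ∀ i j, G.Adj (c i) (c j) ↔ (j = i + 1 ∨ i = j + 1)) :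
    ∀ v, v ∉ Set.range c → (∃ i, G.Adj v (c i)) →
      (∃! i, G.Adj v (c i)) ∨
      (∃ i j : ZMod 5, i ≠ j ∧ j ≠ i + 1 ∧ i ≠ j + 1 ∧
        ∀ k, G.Adj v (c k) ↔ (k = i ∨ k = j)) := by
  intro v _ hex
  refine ZMod.existsUnique_or_nonconsecutive_pair_of_no_consecutive _ hex ?_
  rintro i ⟨hi, hi'⟩
  have hcycle : G.Adj (c i) (c (i + 1)) := (hC i (i + 1)).2 (Or.inl rfl)
  exact G.isIndepSet_neighborSet_of_triangleFree htri v hi hi' hcycle.ne hcycle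

/-- In a triangle-free `S_{1,2,2}`-free graph with an induced 5-cycle `c`, every vertex
outside the cycle with a neighbour on the cycle has either exactly one neighbour on the
cycle, or exactly two non-consecutive neighbours on the cycle. -/
theorem neighbours_on_C5 (G : SimpleGraph V) (htri : G.CliqueFree 3)
    (hS : IsEmpty (S122 ↪g G)) (c : ZMod 5 → V) (hinj : Function.Injective c)
    (hC : ∀ i j, G.Adj (c i) (c j) ↔ (j = i + 1 ∨ i = j + 1)) :
    ∀ v, v ∉ Set.range c → (∃ i, G.Adj v (c i)) →
      (∃! i, G.Adj v (c i)) ∨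
      (∃ i j : ZMod 5, i ≠ j ∧ j ≠ i + 1 ∧ i ≠ j + 1 ∧
        ∀ k, G.Adj v (c k) ↔ (k = i ∨ k = j)) :=
  neighbours_on_C5_general G htri c hC
end

section
/- Let G be a connected triangle-free S_{1,2,2}-free graph containing an induced 5-cycle C. Then every vertex of G outside C has at least one neighbour on C. -/
variable {V : Type*}

/-!
If some vertex has no neighbour on the cycle `C`, then, as `G` is connected, some edge `uw`
joins such a vertex `u` to a vertex `w` with a neighbour on `C`. By triangle-freeness the
neighbours of `w` on `C` are pairwise non-consecutive, so after rotating `C = c₀c₁c₂c₃c₄` we may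
assume `w ~ c₀` and `w ≁ c₁, c₃, c₄`. Then `c₀` with the pendant `c₁` and the paths `c₀ w u` and
`c₀ c₄ c₃` induces `S_{1,2,2}`.
-/

instance : DecidableRel S122.Adj := by
  unfold S122
  infer_instance

theorem S122_eq_of_forall_adj_iff :
    ∀ a b : Fin 6, (∀ x, S122.Adj a x ↔ S122.Adj b x) → a = b := by
  decide

namespace SimpleGraph

variable {W : Type*} {G : SimpleGraph V} {H : SimpleGraph W}

theorem injective_of_forall_adj_iff (hH : ∀ a b, (∀ x, H.Adj a x ↔ H.Adj b x) → a = b)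
    {f : W → V} (hf : ∀ a b, G.Adj (f a) (f b) ↔ H.Adj a b) : Function.Injective f :=
  fun a b hab => hH a b fun x => by rw [← hf, ← hf, hab]

def IsInducedC5 (G : SimpleGraph V) (c : ZMod 5 → V) : Prop :=
  ∀ i j, G.Adj (c i) (c j) ↔ (j = i + 1 ∨ i = j + 1)

namespace IsInducedC5

variable {c : ZMod 5 → V}

theorem rotate (hc : G.IsInducedC5 c) (k : ZMod 5) : G.IsInducedC5 (fun i => c (k + i)) := by
  intro i j
  simp only [hc (k + i) (k + j), add_assoc, add_right_inj]

theorem adj_add_one (hc : G.IsInducedC5 c) (i : ZMod 5) : G.Adj (c i) (c (i + 1)) :=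
  (hc _ _).2 (Or.inl rfl)

theorem not_adj_add_one_of_adj (hc : G.IsInducedC5 c) (htri : G.CliqueFree 3) {w : V}
    {i : ZMod 5} (hw : G.Adj w (c i)) : ¬ G.Adj w (c (i + 1)) := by
  classical
  exact fun hw' => htri _ (is3Clique_triple_iff.2 ⟨hw, hw', hc.adj_add_one i⟩)

theorem exists_adj_not_adj_add_three (hc : G.IsInducedC5 c) (htri : G.CliqueFree 3) {w : V}
    (hw : ∃ j, G.Adj w (c j)) : ∃ i, G.Adj w (c i) ∧ ¬ G.Adj w (c (i + 3)) := by
  obtain ⟨j, hj⟩ := hw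
  by_cases hj3 : G.Adj w (c (j + 3))
  · refine ⟨j + 3, hj3, ?_⟩
    rw [add_assoc, show (3 + 3 : ZMod 5) = 1 from rfl]
    exact hc.not_adj_add_one_of_adj htri hj
  · exact ⟨j, hj, hj3⟩

theorem nonempty_S122_embedding (hc : G.IsInducedC5 c) (htri : G.CliqueFree 3) {u w : V}
    (hw0 : G.Adj w (c 0)) (hw3 : ¬ G.Adj w (c 3)) (huw : G.Adj u w) (hu : ∀ k, ¬ G.Adj u (c k)) :
    Nonempty (S122 ↪g G) := by
  have hw1 : ¬ G.Adj w (c 1) := by simpa using hc.not_adj_add_one_of_adj htri hw0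
  have hw4 : ¬ G.Adj w (c 4) := fun hw4 =>
    hc.not_adj_add_one_of_adj htri hw4 (by rwa [show (4 + 1 : ZMod 5) = 0 from rfl])
  let f : Fin 6 → V := ![c 0, c 1, w, u, c 4, c 3]
  have hf : ∀ a b, G.Adj (f a) (f b) ↔ S122.Adj a b := by
    intro a b
    fin_cases a <;> fin_cases b <;>
      simp +decide [f, hc _ _, hw0, hw0.symm, hw1, mt Adj.symm hw1, hw3, mt Adj.symm hw3, hw4,
        mt Adj.symm hw4, huw, huw.symm, hu, fun k => mt Adj.symm (hu k)]
  exact ⟨⟨⟨f, injective_of_forall_adj_iff S122_eq_of_forall_adj_iff hf⟩, hf _ _⟩⟩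

end IsInducedC5

end SimpleGraph

open SimpleGraph

theorem every_vertex_has_neighbour_on_C5_general (G : SimpleGraph V) (hconn : G.Connected)
    (htri : G.CliqueFree 3) (hS : IsEmpty (S122 ↪g G))
    (c : ZMod 5 → V)
    (hC : ∀ i j, G.Adj (c i) (c j) ↔ (j = i + 1 ∨ i = j + 1)) :
    ∀ v, v ∉ Set.range c → ∃ i, G.Adj v (c i) := by
  have hc : G.IsInducedC5 c := hC
  intro v _
  by_contra! hv
  obtain ⟨p⟩ := hconn.preconnected v (c 0)
  obtain ⟨⟨⟨u, w⟩, huw⟩, -, hu, hw⟩ := p.exists_boundary_dart {x | ∀ k, ¬ G.Adj x (c k)} hv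
    fun h => h 1 (hc.adj_add_one 0)
  simp only [Set.mem_ofPred_eq, not_forall, not_not] at hu hw
  obtain ⟨i, hwi, hwi3⟩ := hc.exists_adj_not_adj_add_three htri hw
  exact ((hc.rotate i).nonempty_S122_embedding htri (by simpa) hwi3 huw (hu <| i + ·)).elim hS.false

/-- In a connected triangle-free `S_{1,2,2}`-free graph with an induced 5-cycle `c`,
every vertex outside the cycle has a neighbour on the cycle. -/
theorem every_vertex_has_neighbour_on_C5 (G : SimpleGraph V) (hconn : G.Connected)
    (htri : G.CliqueFree 3) (hS : IsEmpty (S122 ↪g G))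
    (c : ZMod 5 → V) (hinj : Function.Injective c)
    (hC : ∀ i j, G.Adj (c i) (c j) ↔ (j = i + 1 ∨ i = j + 1)) :
    ∀ v, v ∉ Set.range c → ∃ i, G.Adj v (c i) :=
  every_vertex_has_neighbour_on_C5_general G hconn htri hS c hC
end

section
/- In a triangle-free S_{1,2,2}-free graph G with an induced 5-cycle c_1...c_5 (indices mod 5), let V_i be the set of vertices outside the cycle whose unique cycle-neighbour is c_i. Then for each i, V_i is complete to V_{i-1} ∪ V_{i+1} and anti-complete to V_{i-2} ∪ V_{i+2}. -/
variable {V : Type*}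

/-- `V_i`: the vertices outside the 5-cycle `c` whose unique neighbour on the cycle is `c i`. -/
def Vset (G : SimpleGraph V) (c : ZMod 5 → V) (i : ZMod 5) : Set V :=
  {v | v ∉ Set.range c ∧ ∀ j, G.Adj v (c j) ↔ j = i}

/-- `W_i`: the vertices outside the 5-cycle `c` whose neighbours on the cycle are exactly
`c (i-1)` and `c (i+1)`. -/
def Wset (G : SimpleGraph V) (c : ZMod 5 → V) (i : ZMod 5) : Set V :=
  {v | v ∉ Set.range c ∧ ∀ j, G.Adj v (c j) ↔ (j = i - 1 ∨ j = i + 1)}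

/-! If `a ∈ V_i` and `b ∈ V_{i+1}` were non-adjacent, then `a, c_i, c_{i+1}, b, c_{i-1}, c_{i-2}`
would induce `S_{1,2,2}` with centre `c_i`; if `a ∈ V_i` and `b ∈ V_{i+2}` were adjacent, then
`c_{i+1}, c_i, a, b, c_{i-1}, c_{i-2}` would. The claims about `V_{i-1}` and `V_{i-2}` are the
same statements with `a` and `b` exchanged. -/

instance inst_s9 : DecidableRel S122.Adj := fun x y =>
  decidable_of_iff (s(x, y) ∈ [s(0,1), s(0,2), s(2,3), s(0,4), s(4,5)] ∧ x ≠ y) <| by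
    simp [S122]

lemma S122_eq_of_forall_adj_iff_s9 {x y : Fin 6} (h : ∀ z, S122.Adj x z ↔ S122.Adj y z) :
    x = y := by
  revert x y; decide

lemma injective_of_adj_iff_adj {W : Type*} {G : SimpleGraph V} {H : SimpleGraph W}
    (hH : ∀ x y, (∀ z, H.Adj x z ↔ H.Adj y z) → x = y) {f : W → V}
    (hf : ∀ x y, G.Adj (f x) (f y) ↔ H.Adj x y) : Function.Injective f :=
  fun x y hxy => hH x y fun z => by rw [← hf, ← hf, hxy]

lemma nonempty_S122_embedding_of_adj {G : SimpleGraph V} {x₀ x₁ x₂ x₃ x₄ x₅ : V}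
    (h01 : G.Adj x₀ x₁) (h02 : G.Adj x₀ x₂) (h23 : G.Adj x₂ x₃) (h04 : G.Adj x₀ x₄)
    (h45 : G.Adj x₄ x₅) (h03 : ¬G.Adj x₀ x₃) (h05 : ¬G.Adj x₀ x₅) (h12 : ¬G.Adj x₁ x₂)
    (h13 : ¬G.Adj x₁ x₃) (h14 : ¬G.Adj x₁ x₄) (h15 : ¬G.Adj x₁ x₅) (h24 : ¬G.Adj x₂ x₄)
    (h25 : ¬G.Adj x₂ x₅) (h34 : ¬G.Adj x₃ x₄) (h35 : ¬G.Adj x₃ x₅) :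
    Nonempty (S122 ↪g G) := by
  set f : Fin 6 → V := ![x₀, x₁, x₂, x₃, x₄, x₅]
  have hlt : ∀ x y, x < y → (G.Adj (f x) (f y) ↔ S122.Adj x y) := by
    intro x y hxy
    fin_cases x <;> fin_cases y <;> simp +decide [f, *] at hxy ⊢
  have hf : ∀ x y, G.Adj (f x) (f y) ↔ S122.Adj x y := by
    intro x y
    rcases lt_trichotomy x y with h | rfl | h
    · exact hlt x y h
    · simp
    · rw [G.adj_comm, S122.adj_comm]; exact hlt y x h
  exact ⟨⟨⟨f, injective_of_adj_iff_adj (fun _ _ => S122_eq_of_forall_adj_iff_s9) hf⟩, hf _ _⟩⟩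

section FiveCycle

variable {G : SimpleGraph V} {c : ZMod 5 → V} {i : ZMod 5} {v : V}

lemma cycle_adj_iff_of_mem_Vset (hv : v ∈ Vset G c i) (j : ZMod 5) : G.Adj (c j) v ↔ j = i :=
  G.adj_comm _ _ |>.trans (hv.2 j)

variable (hS : IsEmpty (S122 ↪g G)) (hC : ∀ i j, G.Adj (c i) (c j) ↔ (j = i + 1 ∨ i = j + 1))
include hS hC

lemma adj_of_mem_Vset_of_mem_Vset_add_one {a b : V} (ha : a ∈ Vset G c i)
    (hb : b ∈ Vset G c (i + 1)) : G.Adj a b := by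
  by_contra hab
  refine hS.false (nonempty_S122_embedding_of_adj (x₀ := c i) (x₁ := a) (x₂ := c (i + 1))
    (x₃ := b) (x₄ := c (i - 1)) (x₅ := c (i - 2))
    ?_ ?_ ?_ ?_ ?_ ?_ ?_ ?_ hab ?_ ?_ ?_ ?_ ?_ ?_).some
  all_goals simp only [hC, ha.2, hb.2, cycle_adj_iff_of_mem_Vset ha, cycle_adj_iff_of_mem_Vset hb]
  all_goals generalize i = k; revert k; decide

lemma not_adj_of_mem_Vset_of_mem_Vset_add_two {a b : V} (ha : a ∈ Vset G c i)
    (hb : b ∈ Vset G c (i + 2)) : ¬G.Adj a b := by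
  intro hab
  refine hS.false (nonempty_S122_embedding_of_adj (x₀ := c i) (x₁ := c (i + 1)) (x₂ := a)
    (x₃ := b) (x₄ := c (i - 1)) (x₅ := c (i - 2))
    ?_ ?_ hab ?_ ?_ ?_ ?_ ?_ ?_ ?_ ?_ ?_ ?_ ?_ ?_).some
  all_goals simp only [hC, ha.2, hb.2, cycle_adj_iff_of_mem_Vset ha, cycle_adj_iff_of_mem_Vset hb]
  all_goals generalize i = k; revert k; decide

end FiveCycle

theorem Vset_complete_anticomplete_general (G : SimpleGraph V)
    (hS : IsEmpty (S122 ↪g G)) (c : ZMod 5 → V)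
    (hC : ∀ i j, G.Adj (c i) (c j) ↔ (j = i + 1 ∨ i = j + 1)) :
    ∀ i : ZMod 5,
      (∀ a ∈ Vset G c i, ∀ b ∈ Vset G c (i + 1), G.Adj a b) ∧
      (∀ a ∈ Vset G c i, ∀ b ∈ Vset G c (i - 1), G.Adj a b) ∧
      (∀ a ∈ Vset G c i, ∀ b ∈ Vset G c (i + 2), ¬ G.Adj a b) ∧
      (∀ a ∈ Vset G c i, ∀ b ∈ Vset G c (i - 2), ¬ G.Adj a b) := by
  intro i
  refine ⟨fun a ha b hb => adj_of_mem_Vset_of_mem_Vset_add_one hS hC ha hb,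
    fun a ha b hb => ?_, fun a ha b hb => not_adj_of_mem_Vset_of_mem_Vset_add_two hS hC ha hb,
    fun a ha b hb => ?_⟩
  · rw [← sub_add_cancel i 1] at ha
    exact (adj_of_mem_Vset_of_mem_Vset_add_one hS hC hb ha).symm
  · rw [← sub_add_cancel i 2] at ha
    exact fun hab => not_adj_of_mem_Vset_of_mem_Vset_add_two hS hC hb ha hab.symm

/-- `V_i` is complete to `V_{i-1} ∪ V_{i+1}` and anti-complete to `V_{i-2} ∪ V_{i+2}`. -/
theorem Vset_complete_anticomplete (G : SimpleGraph V) (htri : G.CliqueFree 3)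
    (hS : IsEmpty (S122 ↪g G)) (c : ZMod 5 → V) (hinj : Function.Injective c)
    (hC : ∀ i j, G.Adj (c i) (c j) ↔ (j = i + 1 ∨ i = j + 1)) :
    ∀ i : ZMod 5,
      (∀ a ∈ Vset G c i, ∀ b ∈ Vset G c (i + 1), G.Adj a b) ∧
      (∀ a ∈ Vset G c i, ∀ b ∈ Vset G c (i - 1), G.Adj a b) ∧
      (∀ a ∈ Vset G c i, ∀ b ∈ Vset G c (i + 2), ¬ G.Adj a b) ∧
      (∀ a ∈ Vset G c i, ∀ b ∈ Vset G c (i - 2), ¬ G.Adj a b) :=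
  Vset_complete_anticomplete_general G hS c hC
end

section
/- In a triangle-free S_{1,2,2}-free graph G with an induced 5-cycle c_1...c_5 (indices mod 5), with V_i and W_i defined as the vertices outside the cycle whose cycle-neighbourhood is {c_i} and {c_{i-1},c_{i+1}} respectively, the induced bipartite graphs G[V_i ∪ W_{i+2}], G[V_i ∪ W_{i-2}] and G[W_i ∪ W_{i+1}] are 2P_2-free. -/
variable {V : Type*}

/-- `2P_2`: the disjoint union of two edges. -/
def twoP2 : SimpleGraph (Fin 4) := SimpleGraph.fromEdgeSet {s(0,1), s(2,3)}

/-!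
A 2P_2 `ab, cd` in a bipartite graph `G[A ∪ B]` has, say, `a, c ∈ A` and `b, d ∈ B`. If some
vertex `p` is adjacent to all of `A` and to none of `B`, and `p` has a neighbour `q` with no
neighbour in `A ∪ B`, then `p` together with the pendant `q` and the paths `p-a-b`, `p-c-d` spans
an induced `S_{1,2,2}`. For the three pairs of the theorem the cycle supplies such `p, q`:
`(c_i, c_{i-1})`, `(c_i, c_{i+1})` and `(c_{i-1}, c_{i-2})`, while every side is independent as it
lies in the neighbourhood of a cycle vertex.
-/

section

variable {G : SimpleGraph V}

def IsInduced2P2 (G : SimpleGraph V) (a b c d : V) : Prop :=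
  G.Adj a b ∧ G.Adj c d ∧ ¬G.Adj a c ∧ ¬G.Adj a d ∧ ¬G.Adj b c ∧ ¬G.Adj b d

theorem IsInduced2P2.swap_left {a b c d : V} (h : IsInduced2P2 G a b c d) :
    IsInduced2P2 G b a c d :=
  let ⟨hab, hcd, hac, had, hbc, hbd⟩ := h
  ⟨hab.symm, hcd, hbc, hbd, hac, had⟩

theorem IsInduced2P2.swap_right {a b c d : V} (h : IsInduced2P2 G a b c d) :
    IsInduced2P2 G a b d c :=
  let ⟨hab, hcd, hac, had, hbc, hbd⟩ := h
  ⟨hab, hcd.symm, had, hac, hbd, hbc⟩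

theorem isInduced2P2_of_embedding (e : twoP2 ↪g G) : IsInduced2P2 G (e 0) (e 1) (e 2) (e 3) := by
  simp only [IsInduced2P2, e.map_adj_iff]
  unfold twoP2
  decide

theorem injective_of_forall_adj_iff {W : Type*} {H : SimpleGraph W}
    (hH : Function.Injective H.neighborSet) {f : W → V}
    (hf : ∀ a b, G.Adj (f a) (f b) ↔ H.Adj a b) : Function.Injective f :=
  fun a b hab => hH <| Set.ext fun x => by simp only [SimpleGraph.mem_neighborSet, ← hf, hab]

theorem S122_neighborSet_injective : Function.Injective S122.neighborSet := by
  have : ∀ a b : Fin 6, (∀ x, S122.Adj a x ↔ S122.Adj b x) → a = b := by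
    unfold S122
    decide
  exact fun a b h => this a b (Set.ext_iff.mp h)

theorem IsInduced2P2.nonempty_S122_embedding {a b c d p q : V} (h : IsInduced2P2 G a b c d)
    (hpq : G.Adj p q) (hpa : G.Adj p a) (hpc : G.Adj p c) (hpb : ¬G.Adj p b) (hpd : ¬G.Adj p d)
    (hqa : ¬G.Adj q a) (hqb : ¬G.Adj q b) (hqc : ¬G.Adj q c) (hqd : ¬G.Adj q d) :
    Nonempty (S122 ↪g G) := by
  obtain ⟨hab, hcd, hac, had, hbc, hbd⟩ := h
  have hf : ∀ i j, G.Adj (![p, q, a, b, c, d] i) (![p, q, a, b, c, d] j) ↔ S122.Adj i j := by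
    intro i j
    fin_cases i <;> fin_cases j <;> simp [S122, *] <;> rwa [G.adj_comm]
  -- No two vertices of `S_{1,2,2}` have the same neighbourhood, so the six vertices are distinct.
  exact ⟨⟨⟨_, injective_of_forall_adj_iff S122_neighborSet_injective hf⟩, hf _ _⟩⟩

theorem isIndepSet_of_forall_adj (htri : G.CliqueFree 3) {A : Set V} {v : V}
    (hA : ∀ a ∈ A, G.Adj v a) : G.IsIndepSet A :=
  (G.isIndepSet_neighborSet_of_triangleFree htri v).mono hA

theorem isEmpty_twoP2_embedding_induce_union (hS : IsEmpty (S122 ↪g G)) {A B : Set V}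
    (hA : G.IsIndepSet A) (hB : G.IsIndepSet B) {p q : V} (hpq : G.Adj p q)
    (hpA : ∀ a ∈ A, G.Adj p a) (hpB : ∀ b ∈ B, ¬G.Adj p b)
    (hqA : ∀ a ∈ A, ¬G.Adj q a) (hqB : ∀ b ∈ B, ¬G.Adj q b) :
    IsEmpty (twoP2 ↪g G.induce (A ∪ B)) := by
  refine ⟨fun e => ?_⟩
  have h := isInduced2P2_of_embedding ((SimpleGraph.Embedding.induce _).comp e)
  have split {x y : V} (hx : x ∈ A ∪ B) (hy : y ∈ A ∪ B) (hxy : G.Adj x y) :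
      x ∈ A ∧ y ∈ B ∨ y ∈ A ∧ x ∈ B := by
    rcases hx with hx | hx <;> rcases hy with hy | hy
    · exact absurd hxy (hA hx hy hxy.ne)
    · exact .inl ⟨hx, hy⟩
    · exact .inr ⟨hy, hx⟩
    · exact absurd hxy (hB hx hy hxy.ne)
  have key {a b c d : V} (h : IsInduced2P2 G a b c d) (ha : a ∈ A) (hb : b ∈ B) (hc : c ∈ A)
      (hd : d ∈ B) : False :=
    hS.false (h.nonempty_S122_embedding hpq (hpA a ha) (hpA c hc) (hpB b hb) (hpB d hd)
      (hqA a ha) (hqB b hb) (hqA c hc) (hqB d hd)).some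
  rcases split (e 0).2 (e 1).2 h.1 with ⟨h0, h1⟩ | ⟨h1, h0⟩ <;>
    rcases split (e 2).2 (e 3).2 h.2.1 with ⟨h2, h3⟩ | ⟨h3, h2⟩
  exacts [key h h0 h1 h2 h3, key h.swap_right h0 h1 h3 h2, key h.swap_left h1 h0 h2 h3,
    key h.swap_left.swap_right h1 h0 h3 h2]

theorem isEmpty_twoP2_embedding_induce_union_of_cycle (htri : G.CliqueFree 3)
    (hS : IsEmpty (S122 ↪g G)) {c : ZMod 5 → V}
    (hC : ∀ i j, G.Adj (c i) (c j) ↔ (j = i + 1 ∨ i = j + 1)) {A B : Set V}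
    {S T : ZMod 5 → Prop} (hA : ∀ x ∈ A, ∀ l, G.Adj x (c l) ↔ S l)
    (hB : ∀ x ∈ B, ∀ l, G.Adj x (c l) ↔ T l) {j k t : ZMod 5}
    (hidx : (k = j + 1 ∨ j = k + 1) ∧ S j ∧ ¬T j ∧ ¬S k ∧ ¬T k ∧ T t) :
    IsEmpty (twoP2 ↪g G.induce (A ∪ B)) := by
  obtain ⟨hjk, hSj, hTj, hSk, hTk, hTt⟩ := hidx
  have hpA (a) (ha : a ∈ A) : G.Adj (c j) a := ((hA a ha j).2 hSj).symm
  exact isEmpty_twoP2_embedding_induce_union hS (isIndepSet_of_forall_adj htri hpA)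
    (isIndepSet_of_forall_adj htri fun b hb => ((hB b hb t).2 hTt).symm) ((hC j k).2 hjk) hpA
    (fun b hb h => hTj ((hB b hb j).1 h.symm)) (fun a ha h => hSk ((hA a ha k).1 h.symm))
    (fun b hb h => hTk ((hB b hb k).1 h.symm))

end

theorem induced_2P2_free_general (G : SimpleGraph V) (htri : G.CliqueFree 3)
    (hS : IsEmpty (S122 ↪g G)) (c : ZMod 5 → V)
    (hC : ∀ i j, G.Adj (c i) (c j) ↔ (j = i + 1 ∨ i = j + 1)) :
    ∀ i : ZMod 5,
      IsEmpty (twoP2 ↪g G.induce (Vset G c i ∪ Wset G c (i + 2))) ∧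
      IsEmpty (twoP2 ↪g G.induce (Vset G c i ∪ Wset G c (i - 2))) ∧
      IsEmpty (twoP2 ↪g G.induce (Wset G c i ∪ Wset G c (i + 1))) := by
  intro i
  refine ⟨isEmpty_twoP2_embedding_induce_union_of_cycle htri hS hC (fun _ hx => hx.2)
      (fun _ hx => hx.2) (j := i) (k := i - 1) (t := i + 1) ?_,
    isEmpty_twoP2_embedding_induce_union_of_cycle htri hS hC (fun _ hx => hx.2)
      (fun _ hx => hx.2) (j := i) (k := i + 1) (t := i - 1) ?_,
    isEmpty_twoP2_embedding_induce_union_of_cycle htri hS hC (fun _ hx => hx.2)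
      (fun _ hx => hx.2) (j := i - 1) (k := i - 2) (t := i) ?_⟩
  all_goals (revert i; decide)

/-- The induced subgraphs `G[V_i ∪ W_{i+2}]`, `G[V_i ∪ W_{i-2}]` and `G[W_i ∪ W_{i+1}]`
are `2P_2`-free. -/
theorem induced_2P2_free (G : SimpleGraph V) (htri : G.CliqueFree 3)
    (hS : IsEmpty (S122 ↪g G)) (c : ZMod 5 → V) (hinj : Function.Injective c)
    (hC : ∀ i j, G.Adj (c i) (c j) ↔ (j = i + 1 ∨ i = j + 1)) :
    ∀ i : ZMod 5,
      IsEmpty (twoP2 ↪g G.induce (Vset G c i ∪ Wset G c (i + 2))) ∧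
      IsEmpty (twoP2 ↪g G.induce (Vset G c i ∪ Wset G c (i - 2))) ∧
      IsEmpty (twoP2 ↪g G.induce (Wset G c i ∪ Wset G c (i + 1))) :=
  induced_2P2_free_general G htri hS c hC
end

section
/- For every n ≥ 2, every tree having no subgraph isomorphic to the path P_n has path-width at most n−2. -/
universe u
variable {V : Type u}

/-- `bag` (indexed by a linearly ordered type) is a path decomposition of `G`:
every vertex is in some bag, every edge is inside some bag, and the set of bags
containing any fixed vertex forms an interval. -/
def IsPathDecomp {V : Type u} (G : SimpleGraph V) {ι : Type u} (ord : LinearOrder ι)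
    (bag : ι → Set V) : Prop :=
  (∀ v, ∃ i, v ∈ bag i) ∧
  (∀ ⦃a b⦄, G.Adj a b → ∃ i, a ∈ bag i ∧ b ∈ bag i) ∧
  (∀ (v : V) (i j k : ι), ord.le i j → ord.le j k → v ∈ bag i → v ∈ bag k → v ∈ bag j)

/-- `G` admits a path decomposition of width at most `k` (all bags of size at most `k+1`). -/
def PathwidthLE {V : Type u} (G : SimpleGraph V) (k : ℕ∞) : Prop :=
  ∃ (ι : Type u) (ord : LinearOrder ι) (bag : ι → Set V),
    IsPathDecomp G ord bag ∧ ∀ i, (bag i).encard ≤ k + 1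

/-- The path-width of `G`. -/
noncomputable def pathwidth {V : Type u} (G : SimpleGraph V) : ℕ∞ :=
  sInf {k | PathwidthLE G k}


lemma list_cons_le_cases {α : Type*} [LinearOrder α] {x y : α} {l m : List α}
    (h : (x :: l : List α) ≤ y :: m) : x < y ∨ (x = y ∧ l ≤ m) := by
  rcases lt_or_eq_of_le h with h | h
  · have h' : List.Lex (· < ·) (x :: l) (y :: m) := h
    cases h' with
    | cons h'' => exact Or.inr ⟨rfl, le_of_lt h''⟩
    | rel h'' => exact Or.inl h''
  · injection h with h1 h2
    exact Or.inr ⟨h1, le_of_eq h2⟩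

lemma list_prefix_convex {α : Type*} [LinearOrder α] (p : List α) :
    ∀ {a b c : List α}, p <+: a → p <+: b → a ≤ c → c ≤ b → p <+: c := by
  induction p with
  | nil => intro a b c _ _ _ _; exact List.nil_prefix
  | cons x p ih =>
    intro a b c hpa hpb hac hcb
    obtain ⟨a', rfl⟩ := hpa
    obtain ⟨b', rfl⟩ := hpb
    cases c with
    | nil =>
      exfalso
      rcases lt_or_eq_of_le hac with hh | hh
      · exact List.not_lex_nil (hh : List.Lex (· < ·) _ _)
      · simp at hh
    | cons y c' =>
      have h1 := list_cons_le_cases (by simpa using hac)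
      have h2 := list_cons_le_cases (by simpa using hcb)
      rcases h1 with h1 | ⟨rfl, h1⟩
      · rcases h2 with h2 | ⟨rfl, h2⟩
        · exact absurd h2 (lt_asymm h1)
        · exact absurd h1 (lt_irrefl _)
      · rcases h2 with h2 | ⟨_, h2⟩
        · exact absurd h2 (lt_irrefl _)
        · obtain ⟨t, ht⟩ := ih (List.prefix_append p a') (List.prefix_append p b') h1 h2
          exact ⟨t, by rw [List.cons_append, ht]⟩

/-- For `n ≥ 2`, every tree with no subgraph isomorphic to the path `P_n` has
path-width at most `n - 2`. -/
theorem tree_no_path_pathwidth (n : ℕ) (hn : 2 ≤ n) (T : SimpleGraph V) (hT : T.IsTree)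
    (h : ¬ ∃ f : Fin n ↪ V, ∀ i j, (SimpleGraph.pathGraph n).Adj i j → T.Adj (f i) (f j)) :
    pathwidth T ≤ ((n - 2 : ℕ) : ℕ∞) := by
  classical
  obtain ⟨r⟩ : Nonempty V := hT.isConnected.nonempty
  have hEU := hT.existsUnique_path
  set P : (v : V) → T.Walk r v := fun v => (hEU r v).choose with hPdef
  have hP : ∀ v, (P v).IsPath := fun v => (hEU r v).choose_spec.1
  have hPu : ∀ (v : V) (q : T.Walk r v), q.IsPath → q = P v :=
    fun v q hq => ((hEU r v).choose_spec.2 q hq)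
  set S : V → List V := fun v => (P v).support with hSdef
  have hlast : ∀ v, (S v).getLast? = some v := fun v => by
    rw [List.getLast?_eq_getLast_of_ne_nil (SimpleGraph.Walk.support_ne_nil _),
      SimpleGraph.Walk.getLast_support]
  have hSinj : Function.Injective S := fun u v huv => by
    have := (hlast u).symm.trans (huv ▸ hlast v)
    exact Option.some_injective _ this
  have hvS : ∀ v, v ∈ S v := fun v => (P v).end_mem_support
  -- prefix characterization
  have hpref : ∀ {u v : V}, u ∈ S v → S u <+: S v := by
    intro u v hu
    have h2 : (P v).takeUntil u hu = P u := hPu u _ ((hP v).takeUntil hu)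
    refine ⟨((P v).dropUntil u hu).support.tail, ?_⟩
    calc S u ++ ((P v).dropUntil u hu).support.tail
        = ((P v).takeUntil u hu).support ++ ((P v).dropUntil u hu).support.tail := by rw [h2]
      _ = (((P v).takeUntil u hu).append ((P v).dropUntil u hu)).support :=
          (SimpleGraph.Walk.support_append _ _).symm
      _ = S v := by rw [SimpleGraph.Walk.take_spec]
  have hmem_of_pref : ∀ {u v : V}, S u <+: S v → u ∈ S v :=
    fun {u v} hp => hp.subset (hvS u)
  -- edge lemma
  have hedge : ∀ {a b : V}, T.Adj a b → a ∈ S b ∨ b ∈ S a := by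
    intro a b hab
    by_cases hb : b ∈ S a
    · exact Or.inr hb
    · left
      have hq : (SimpleGraph.Walk.cons hab.symm (P a).reverse).IsPath := by
        apply SimpleGraph.Walk.IsPath.cons ((hP a).reverse)
        simpa [SimpleGraph.Walk.support_reverse] using hb
      have h2 := hPu b _ hq.reverse
      rw [hSdef]
      simp only [← h2, SimpleGraph.Walk.support_reverse, SimpleGraph.Walk.support_cons,
        List.mem_reverse, List.mem_cons]
      right
      simp [SimpleGraph.Walk.support_reverse, hvS a]
  -- linear orders
  obtain ⟨linV, _⟩ := exists_wellOrder V
  letI : LinearOrder V := linV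
  have hle : ∀ a b : V, (LinearOrder.lift' S hSinj).le a b → S a ≤ S b :=
    fun a b hab => hab
  -- the bags
  let bag : V → Set V := fun v => {u | u ∈ S v}
  -- length bound
  have hlen : ∀ v, (S v).length ≤ n - 1 := by
    intro v
    by_contra hlt
    push_neg at hlt
    have hn' : n ≤ (S v).length := by omega
    apply h
    have hnd := (hP v).support_nodup
    have hSl : (S v).length = (P v).support.length := rfl
    have hc := List.isChain_iff_getElem.1 (P v).isChain_adj_support
    have key : ∀ a b : ℕ, (ha : a < n) → (hb : b < n) → a + 1 = b →
        T.Adj ((S v).get ⟨a, by omega⟩) ((S v).get ⟨b, by omega⟩) := by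
      intro a b ha hb hab
      subst hab
      exact hc a (by omega)
    refine ⟨⟨fun i => (S v).get ⟨i.val, by omega⟩, ?_⟩, ?_⟩
    · intro i j hij
      have := List.nodup_iff_injective_get.1 hnd hij
      exact Fin.ext (by simpa using congrArg Fin.val this)
    · intro i j hadj
      rw [SimpleGraph.pathGraph_adj] at hadj
      rcases hadj with h1 | h1
      · exact key i.val j.val i.isLt j.isLt h1
      · exact (key j.val i.val j.isLt i.isLt h1).symm
  -- conclusion
  have hmem : PathwidthLE T ((n - 2 : ℕ) : ℕ∞) := by
    refine ⟨V, LinearOrder.lift' S hSinj, bag, ⟨?_, ?_, ?_⟩, ?_⟩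
    · exact fun v => ⟨v, hvS v⟩
    · intro a b hab
      rcases hedge hab with h1 | h1
      · exact ⟨b, h1, hvS b⟩
      · exact ⟨a, hvS a, h1⟩
    · intro v i j k hij hjk hvi hvk
      exact hmem_of_pref (list_prefix_convex (S v) (hpref hvi) (hpref hvk)
        (hle i j hij) (hle j k hjk))
    · intro v
      have hbe : bag v = ((S v).toFinset : Set V) := by ext u; simp [bag]
      calc (bag v).encard = ((S v).toFinset.card : ℕ∞) := by
            rw [hbe, Set.encard_coe_eq_coe_finsetCard]
        _ ≤ ((S v).length : ℕ∞) := by exact_mod_cast List.toFinset_card_le _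
        _ ≤ ((n - 1 : ℕ) : ℕ∞) := by exact_mod_cast hlen v
        _ = ((n - 2 : ℕ) : ℕ∞) + 1 := by
            have : (n - 1 : ℕ) = (n - 2) + 1 := by omega
            rw [this, Nat.cast_add, Nat.cast_one]
  exact sInf_le hmem
end
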